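/- For each integer v ≥ 0 define polynomials F_n^{(v)}(z) by F_1^{(v)}(z) = 1 and F_{n+1}^{(v)}(z) = (z+1)(z−v+1) F_n^{(v)}(z+1) − z(z−v) F_n^{(v)}(z), define numbers g_n^{(v)} = F_n^{(v)}(v), and define t^{(v)}(m,j) by t^{(v)}(n+1,j) = t^{(v)}(n,j−1) − n(n+v) t^{(v)}(n,j) with t^{(v)}(n,0) = δ_{n,0}, t^{(v)}(n,j) = 0 for n < j. Then for all m ≥ 0 and n ≥ 1, sum_{j=0}^{m} (−1)^{m+j} t^{(v)}(m,j) g_{n+j}^{(v)} = F_n^{(v)}(m+v) · m! · (m+v)! / v!. -/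
import Mathlib


/-- `F^{(v)}_1(z) = 1`,
`F^{(v)}_{n+1}(z) = (z+1)(z-v+1) F^{(v)}_n(z+1) - z(z-v) F^{(v)}_n(z)`. -/
def Fv (v : ℕ) : ℕ → ℚ → ℚ
  | 0, _ => 1
  | 1, _ => 1
  | n + 2, z =>
      (z + 1) * (z - v + 1) * Fv v (n + 1) (z + 1) - z * (z - v) * Fv v (n + 1) z

/-- Genocchi-type numbers `g_n^{(v)} = F_n^{(v)}(v)`. -/
def gv (v n : ℕ) : ℚ := Fv v n (v : ℚ)

/-- Stirling-type numbers of the first kind attached to `a_n = n(n+v)`: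
`t^{(v)}(n+1,j) = t^{(v)}(n,j-1) - n(n+v) t^{(v)}(n,j)`. -/
def tv (v : ℕ) : ℕ → ℕ → ℚ
  | 0, 0 => 1
  | 0, _ + 1 => 0
  | _ + 1, 0 => 0
  | n + 1, j + 1 => tv v n j - (n : ℚ) * ((n : ℚ) + v) * tv v n (j + 1)

lemma tv_eq_zero (v : ℕ) : ∀ n j : ℕ, n < j → tv v n j = 0 := by
  intro n
  induction n with
  | zero =>
    intro j hj
    match j, hj with
    | j + 1, _ => rfl
  | succ n ih =>
    intro j hj
    match j, hj with
    | j + 1, hj =>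
      show tv v n j - (n : ℚ) * ((n : ℚ) + v) * tv v n (j + 1) = 0
      rw [ih j (by omega), ih (j + 1) (by omega)]
      ring

lemma tv_zero_mul (v m : ℕ) : (m : ℚ) * ((m : ℚ) + v) * tv v m 0 = 0 := by
  cases m with
  | zero => simp
  | succ k => show _ * tv v (k + 1) 0 = 0; rw [show tv v (k+1) 0 = 0 from rfl]; ring

lemma key (v : ℕ) : ∀ m n : ℕ,
    ∑ j ∈ Finset.range (m + 1), (-1 : ℚ) ^ (m + j) * tv v m j * gv v (n + 1 + j) =
      Fv v (n + 1) ((m : ℚ) + v) * (m.factorial : ℚ) * ((m + v).factorial : ℚ) /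
        (v.factorial : ℚ) := by
  intro m
  induction m with
  | zero =>
    intro n
    have hv : (v.factorial : ℚ) ≠ 0 := Nat.cast_ne_zero.2 v.factorial_ne_zero
    rw [Finset.sum_range_one]
    show (-1 : ℚ) ^ 0 * tv v 0 0 * gv v (n + 1) = _
    rw [show tv v 0 0 = 1 from rfl]
    simp only [pow_zero, one_mul, mul_one, Nat.cast_zero, zero_add, Nat.factorial_zero,
      Nat.cast_one]
    rw [gv]
    field_simp
  | succ m ih =>
    intro n
    have hv : (v.factorial : ℚ) ≠ 0 := Nat.cast_ne_zero.2 v.factorial_ne_zero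
    rw [Finset.sum_range_succ']
    have hf0 : (-1 : ℚ) ^ (m + 1 + 0) * tv v (m + 1) 0 * gv v (n + 1 + 0) = 0 := by
      rw [show tv v (m + 1) 0 = 0 from rfl]; ring
    rw [hf0, add_zero]
    have hterm : ∀ j ∈ Finset.range (m + 1),
        (-1 : ℚ) ^ (m + 1 + (j + 1)) * tv v (m + 1) (j + 1) * gv v (n + 1 + (j + 1)) =
          (-1 : ℚ) ^ (m + j) * tv v m j * gv v (n + 1 + 1 + j) -
            (m : ℚ) * ((m : ℚ) + v) *
              ((-1 : ℚ) ^ (m + j) * tv v m (j + 1) * gv v (n + 2 + j)) := by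
      intro j _
      have h1 : tv v (m + 1) (j + 1) = tv v m j - (m : ℚ) * ((m : ℚ) + v) * tv v m (j + 1) :=
        rfl
      have h2 : n + 1 + (j + 1) = n + 1 + 1 + j := by omega
      have h3 : n + 1 + (j + 1) = n + 2 + j := by omega
      have h4 : (-1 : ℚ) ^ (m + 1 + (j + 1)) = (-1 : ℚ) ^ (m + j) := by
        rw [show m + 1 + (j + 1) = m + j + 2 from by omega, pow_add]
        ring
      rw [h1, h4,
        show gv v (n + 1 + 1 + j) = gv v (n + 1 + (j + 1)) from by rw [h2]]
      ring
    rw [Finset.sum_congr rfl hterm, Finset.sum_sub_distrib, ← Finset.mul_sum]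
    -- B relation
    have hB : ∑ j ∈ Finset.range (m + 1),
        (-1 : ℚ) ^ (m + j) * tv v m (j + 1) * gv v (n + 2 + j) =
        (-1 : ℚ) ^ m * tv v m 0 * gv v (n + 1) -
          ∑ j ∈ Finset.range (m + 1), (-1 : ℚ) ^ (m + j) * tv v m j * gv v (n + 1 + j) := by
      rw [Finset.sum_range_succ, tv_eq_zero v m (m + 1) (by omega), Finset.sum_range_succ']
      have : ∀ j ∈ Finset.range m,
          (-1 : ℚ) ^ (m + (j + 1)) * tv v m (j + 1) * gv v (n + 1 + (j + 1)) =
            -((-1 : ℚ) ^ (m + j) * tv v m (j + 1) * gv v (n + 2 + j)) := by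
        intro j _
        rw [show n + 1 + (j + 1) = n + 2 + j from by omega,
          show m + (j + 1) = m + j + 1 from by omega, pow_succ]
        ring
      rw [Finset.sum_congr rfl this, Finset.sum_neg_distrib]
      simp only [add_zero, mul_zero, zero_mul]
      ring
    rw [hB, ih (n + 1), ih n]
    -- now pure algebra
    have hF : Fv v (n + 1 + 1) ((m : ℚ) + v) =
        ((m : ℚ) + v + 1) * ((m : ℚ) + v - v + 1) * Fv v (n + 1) ((m : ℚ) + v + 1) -
          ((m : ℚ) + v) * ((m : ℚ) + v - v) * Fv v (n + 1) ((m : ℚ) + v) := rfl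
    rw [hF]
    have harg : ((m + 1 : ℕ) : ℚ) + v = (m : ℚ) + v + 1 := by push_cast; ring
    rw [harg]
    have hfac1 : ((m + 1).factorial : ℚ) = ((m : ℚ) + 1) * (m.factorial : ℚ) := by
      rw [Nat.factorial_succ]; push_cast; ring
    have hfac2 : ((m + 1 + v).factorial : ℚ) = ((m : ℚ) + v + 1) * ((m + v).factorial : ℚ) := by
      rw [show m + 1 + v = (m + v) + 1 from by omega, Nat.factorial_succ]; push_cast; ring
    rw [hfac1, hfac2]
    have hcancel := tv_zero_mul v m
    field_simp
    linear_combination (-(-1 : ℚ) ^ m * gv v (n + 1) * (v.factorial : ℚ)) * hcancel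

theorem genocchi_type_identity (v m n : ℕ) (hn : 1 ≤ n) :
    ∑ j ∈ Finset.range (m + 1), (-1) ^ (m + j) * tv v m j * gv v (n + j) =
      Fv v n ((m : ℚ) + v) * (m.factorial : ℚ) * ((m + v).factorial : ℚ) /
        (v.factorial : ℚ) := by
  obtain ⟨k, rfl⟩ : ∃ k, n = k + 1 := ⟨n - 1, by omega⟩
  exact key v m k
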